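/- arXiv:1410.1152 — 4 statements merged into one kernel-verified Lean document; each statement's English description precedes it below -/
import Mathlib

section
/- Let λ ∈ ℝ, z ∈ ℂ with z ≠ λ, γ ∈ ℝ with γ ≠ 0, and let (a,b) ⊆ ℝ be an interval. Let Φλ : (a,b) → ℝ² be such that t ↦ Φλ(t)^⊤Φλ(t) is integrable on (a,x) for each x ∈ (a,b), set D(x) = ∫_a^x Φλ(t)^⊤Φλ(t) dt and c(x) = 1/γ + D(x), and assume c(x) ≠ 0 for all x ∈ (a,b); set Φ̃(x) = Φλ(x)/c(x). Let Θz, Φz : (a,b) → ℂ² satisfy W_x(Θz,Φz) = 1 for all x ∈ (a,b). Define Φ_γ(x) = Φz(x) + (1/(z-λ))·Φ̃(x)·W_x(Φλ,Φz) and Θ_γ(x) = Θz(x) + (1/(z-λ))·(Φ̃(x)·W_x(Φλ,Θz) + γ·Φ_γ(x)). Then: (i) W_x(Θ_γ,Φ_γ) = 1 for all x ∈ (a,b); (ii) Φλ(x) − Φ̃(x)·D(x) = γ^{-1}·Φ̃(x) for all x ∈ (a,b) (i.e. the commuted regular solution evaluated at z = λ equals γ^{-1}Φ̃). -/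
open MeasureTheory Set

noncomputable section

/-- The Wronskian `W(f,g) = f₁g₂ - f₂g₁` of two vectors in `ℂ²`. -/
def Wr (f g : ℂ × ℂ) : ℂ := f.1 * g.2 - f.2 * g.1

/-- Embedding of `ℝ²` into `ℂ²`. -/
def toC (v : ℝ × ℝ) : ℂ × ℂ := ((v.1 : ℂ), (v.2 : ℂ))

/-!
Both identities are pointwise algebra. The Wronskian is a symplectic form on `ℂ²`, and
`f ↦ f + s • W(φ, f) • φ` is a symplectic transvection, so it preserves `W`. With
`s = (z - λ)⁻¹ c⁻¹` it maps `Φz` to `Φ_γ` and `Θz` to `Θ_γ - (z - λ)⁻¹ γ Φ_γ`, and adding a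
multiple of `Φ_γ` to the first argument does not change `W(·, Φ_γ)`. The second identity is
`c - D = γ⁻¹`.
-/

theorem Wr_self (f : ℂ × ℂ) : Wr f f = 0 := by
  unfold Wr; ring

theorem Wr_add_smul_left (f g h : ℂ × ℂ) (t : ℂ) : Wr (f + t • g) h = Wr f h + t * Wr g h := by
  simp only [Wr, Prod.fst_add, Prod.snd_add, Prod.smul_fst, Prod.smul_snd, smul_eq_mul]; ring

theorem Wr_add_smul_self_left (f g : ℂ × ℂ) (t : ℂ) : Wr (f + t • g) g = Wr f g := by
  rw [Wr_add_smul_left, Wr_self, mul_zero, add_zero]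

def transvection (φ : ℂ × ℂ) (s : ℂ) (f : ℂ × ℂ) : ℂ × ℂ := f + (s * Wr φ f) • φ

theorem Wr_transvection (φ : ℂ × ℂ) (s : ℂ) (f g : ℂ × ℂ) :
    Wr (transvection φ s f) (transvection φ s g) = Wr f g := by
  simp only [transvection, Wr, Prod.fst_add, Prod.snd_add, Prod.smul_fst, Prod.smul_snd,
    smul_eq_mul]
  ring

theorem add_smul_inv_smul_eq_transvection (φ f : ℂ × ℂ) (u c : ℂ) :
    f + (u * Wr φ f) • c⁻¹ • φ = transvection φ (u * c⁻¹) f := by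
  rw [transvection, smul_smul, mul_right_comm]

theorem self_sub_smul_inv_smul {K V : Type*} [Field K] [AddCommGroup V] [Module K V]
    {c : K} (hc : c ≠ 0) (d : K) (v : V) : v - d • c⁻¹ • v = (c - d) • c⁻¹ • v := by
  rw [sub_smul, smul_inv_smul₀ hc]

theorem double_commutation_regular_general
    (a b lam γ : ℝ) (z : ℂ)
    (Φlam : ℝ → ℝ × ℝ)
    (D : ℝ → ℝ)
    (c : ℝ → ℝ) (hc : ∀ x ∈ Ioo a b, c x = 1 / γ + D x)
    (hc0 : ∀ x ∈ Ioo a b, c x ≠ 0)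
    (Φt : ℝ → ℂ × ℂ) (hΦt : ∀ x ∈ Ioo a b, Φt x = ((c x : ℂ))⁻¹ • toC (Φlam x))
    (Θz Φz : ℝ → ℂ × ℂ) (hW : ∀ x ∈ Ioo a b, Wr (Θz x) (Φz x) = 1)
    (Φγ Θγ : ℝ → ℂ × ℂ)
    (hΦγ : ∀ x ∈ Ioo a b,
      Φγ x = Φz x + ((z - (lam : ℂ))⁻¹ * Wr (toC (Φlam x)) (Φz x)) • Φt x)
    (hΘγ : ∀ x ∈ Ioo a b,
      Θγ x = Θz x + (z - (lam : ℂ))⁻¹ •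
        ((Wr (toC (Φlam x)) (Θz x)) • Φt x + (γ : ℂ) • Φγ x)) :
    (∀ x ∈ Ioo a b, Wr (Θγ x) (Φγ x) = 1) ∧
    (∀ x ∈ Ioo a b,
      toC (Φlam x) - ((D x : ℝ) : ℂ) • Φt x = ((γ⁻¹ : ℝ) : ℂ) • Φt x) := by
  refine ⟨fun x hx => ?_, fun x hx => ?_⟩
  · set u := (z - (lam : ℂ))⁻¹
    set T := transvection (toC (Φlam x)) (u * (c x : ℂ)⁻¹)
    have hΦ : Φγ x = T (Φz x) := by
      rw [hΦγ x hx, hΦt x hx, add_smul_inv_smul_eq_transvection]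
    have hΘ : Θγ x = T (Θz x) + (u * γ) • Φγ x := by
      rw [hΘγ x hx, hΦt x hx, smul_add, smul_smul u, ← add_assoc, add_smul_inv_smul_eq_transvection,
        smul_smul]
    rw [hΘ, Wr_add_smul_self_left, hΦ, Wr_transvection, hW x hx]
  · have hcD : ((c x : ℝ) : ℂ) - (D x : ℂ) = ((γ⁻¹ : ℝ) : ℂ) := by
      rw [hc x hx]; push_cast; ring
    rw [hΦt x hx, self_sub_smul_inv_smul (by exact_mod_cast hc0 x hx), hcD]

/-- Double commutation starting from the regular solution `Φ(λ,·)` at the left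
endpoint: the transformed solutions `Θ_γ`, `Φ_γ` have Wronskian `1`, and the
commuted regular solution at `z = λ`, namely `Φ(λ,x) - Φ̃(x)·∫_a^x Φ(λ)^⊤Φ(λ)`,
equals `γ⁻¹·Φ̃(x)`. -/
theorem double_commutation_regular
    (a b lam γ : ℝ) (hγ : γ ≠ 0) (z : ℂ) (hz : z ≠ (lam : ℂ))
    (Φlam : ℝ → ℝ × ℝ)
    (hint : ∀ x ∈ Ioo a b,
      IntegrableOn (fun t => (Φlam t).1 ^ 2 + (Φlam t).2 ^ 2) (Ioo a x))
    (D : ℝ → ℝ)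
    (hD : ∀ x ∈ Ioo a b, D x = ∫ t in Ioo a x, ((Φlam t).1 ^ 2 + (Φlam t).2 ^ 2))
    (c : ℝ → ℝ) (hc : ∀ x ∈ Ioo a b, c x = 1 / γ + D x)
    (hc0 : ∀ x ∈ Ioo a b, c x ≠ 0)
    (Φt : ℝ → ℂ × ℂ) (hΦt : ∀ x ∈ Ioo a b, Φt x = ((c x : ℂ))⁻¹ • toC (Φlam x))
    (Θz Φz : ℝ → ℂ × ℂ) (hW : ∀ x ∈ Ioo a b, Wr (Θz x) (Φz x) = 1)
    (Φγ Θγ : ℝ → ℂ × ℂ)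
    (hΦγ : ∀ x ∈ Ioo a b,
      Φγ x = Φz x + ((z - (lam : ℂ))⁻¹ * Wr (toC (Φlam x)) (Φz x)) • Φt x)
    (hΘγ : ∀ x ∈ Ioo a b,
      Θγ x = Θz x + (z - (lam : ℂ))⁻¹ •
        ((Wr (toC (Φlam x)) (Θz x)) • Φt x + (γ : ℂ) • Φγ x)) :
    (∀ x ∈ Ioo a b, Wr (Θγ x) (Φγ x) = 1) ∧
    (∀ x ∈ Ioo a b,
      toC (Φlam x) - ((D x : ℝ) : ℂ) • Φt x = ((γ⁻¹ : ℝ) : ℂ) • Φt x) :=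
  double_commutation_regular_general a b lam γ z Φlam D c hc hc0 Φt hΦt Θz Φz hW Φγ Θγ hΦγ hΘγ
end
end

section
/- Let λ ∈ ℝ, z ∈ ℂ with z ≠ λ, γ ∈ ℝ with γ ≠ 0, and let (a,b) ⊆ ℝ be an interval. Let Φλ : (a,b) → ℝ², let c : (a,b) → ℝ with c(x) ≠ 0 for all x, and set Φ̃(x) = Φλ(x)/c(x). Let Θz, Φz : (a,b) → ℂ² and M ∈ ℂ, and set Ψz = Θz + M·Φz. Define Φ_γ(x) = Φz(x) + (1/(z-λ))·Φ̃(x)·W_x(Φλ,Φz), Θ_γ(x) = Θz(x) + (1/(z-λ))·(Φ̃(x)·W_x(Φλ,Θz) + γ·Φ_γ(x)), and Ψ_γ(x) = Ψz(x) + (1/(z-λ))·Φ̃(x)·W_x(Φλ,Ψz). Then for all x ∈ (a,b), Ψ_γ(x) = Θ_γ(x) + (M − γ/(z-λ))·Φ_γ(x). (In other words, the singular Weyl function of the doubly commuted operator is M_γ(z) = M(z) − γ/(z-λ).) -/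
open Set

noncomputable section

lemma Wr_add_right (f g h : ℂ × ℂ) : Wr f (g + h) = Wr f g + Wr f h := by
  simp only [Wr, Prod.fst_add, Prod.snd_add]
  ring

lemma Wr_smul_right (f g : ℂ × ℂ) (m : ℂ) : Wr f (m • g) = m * Wr f g := by
  simp only [Wr, Prod.smul_fst, Prod.smul_snd, smul_eq_mul]
  ring

theorem double_commutation_weyl_function_general
    (a b lam γ : ℝ) (z : ℂ)
    (Φlam : ℝ → ℝ × ℝ)
    (Φt : ℝ → ℂ × ℂ)
    (Θz Φz Ψz : ℝ → ℂ × ℂ) (M : ℂ)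
    (hΨ : ∀ x ∈ Ioo a b, Ψz x = Θz x + M • Φz x)
    (Φγ Θγ Ψγ : ℝ → ℂ × ℂ)
    (hΦγ : ∀ x ∈ Ioo a b,
      Φγ x = Φz x + ((z - (lam : ℂ))⁻¹ * Wr (toC (Φlam x)) (Φz x)) • Φt x)
    (hΘγ : ∀ x ∈ Ioo a b,
      Θγ x = Θz x + (z - (lam : ℂ))⁻¹ •
        ((Wr (toC (Φlam x)) (Θz x)) • Φt x + (γ : ℂ) • Φγ x))
    (hΨγ : ∀ x ∈ Ioo a b,
      Ψγ x = Ψz x + ((z - (lam : ℂ))⁻¹ * Wr (toC (Φlam x)) (Ψz x)) • Φt x) :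
    ∀ x ∈ Ioo a b,
      Ψγ x = Θγ x + (M - (γ : ℂ) / (z - (lam : ℂ))) • Φγ x := by
  intro x hx
  -- Linearity of `W(Φλ, ·)` gives `Ψγ - M • Φγ = Θz + (z-λ)⁻¹ W(Φλ, Θz) • Φt = Θγ - γ/(z-λ) • Φγ`.
  rw [hΨγ x hx, hΘγ x hx, hΦγ x hx, hΨ x hx, Wr_add_right, Wr_smul_right, div_eq_inv_mul]
  module

/-- The singular Weyl function of the doubly commuted operator constructed from
`u₋(λ,·) = Φ(λ,·)` is `M_γ(z) = M(z) - γ/(z-λ)`: the transformed Weyl solution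
`Ψ_γ` decomposes as `Θ_γ + (M - γ/(z-λ))·Φ_γ`. -/
theorem double_commutation_weyl_function
    (a b lam γ : ℝ) (hγ : γ ≠ 0) (z : ℂ) (hz : z ≠ (lam : ℂ))
    (Φlam : ℝ → ℝ × ℝ)
    (c : ℝ → ℝ) (hc0 : ∀ x ∈ Ioo a b, c x ≠ 0)
    (Φt : ℝ → ℂ × ℂ) (hΦt : ∀ x ∈ Ioo a b, Φt x = ((c x : ℂ))⁻¹ • toC (Φlam x))
    (Θz Φz Ψz : ℝ → ℂ × ℂ) (M : ℂ)
    (hΨ : ∀ x ∈ Ioo a b, Ψz x = Θz x + M • Φz x)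
    (Φγ Θγ Ψγ : ℝ → ℂ × ℂ)
    (hΦγ : ∀ x ∈ Ioo a b,
      Φγ x = Φz x + ((z - (lam : ℂ))⁻¹ * Wr (toC (Φlam x)) (Φz x)) • Φt x)
    (hΘγ : ∀ x ∈ Ioo a b,
      Θγ x = Θz x + (z - (lam : ℂ))⁻¹ •
        ((Wr (toC (Φlam x)) (Θz x)) • Φt x + (γ : ℂ) • Φγ x))
    (hΨγ : ∀ x ∈ Ioo a b,
      Ψγ x = Ψz x + ((z - (lam : ℂ))⁻¹ * Wr (toC (Φlam x)) (Ψz x)) • Φt x) :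
    ∀ x ∈ Ioo a b,
      Ψγ x = Θγ x + (M - (γ : ℂ) / (z - (lam : ℂ))) • Φγ x :=
  double_commutation_weyl_function_general a b lam γ z Φlam Φt Θz Φz Ψz M hΨ Φγ Θγ Ψγ hΦγ hΘγ hΨγ
end
end

section
/- Let λ ∈ ℝ, z ∈ ℂ with z ≠ λ, β ∈ ℂ, and let (a,b) ⊆ ℝ be an interval. Let Θλ : (a,b) → ℝ², let c : (a,b) → ℝ with c(x) ≠ 0 for all x, and set Θ̃(x) = Θλ(x)/c(x). Let Θz, Φz : (a,b) → ℂ² satisfy W_x(Θz,Φz) = 1 for all x ∈ (a,b). Define Φ_γ(z,x) = (z-λ)·(Φz(x) + (1/(z-λ))·Θ̃(x)·W_x(Θλ,Φz)) and Θ_γ(z,x) = (1/(z-λ))·(Θz(x) + (1/(z-λ))·Θ̃(x)·W_x(Θλ,Θz) + β·Φ_γ(z,x)). Then W_x(Θ_γ(z,·),Φ_γ(z,·)) = 1 for all x ∈ (a,b). Moreover, if for a fixed x the map z ↦ Φ(z,x) ∈ ℂ² is continuous at λ and W_x(Θλ,Φ(λ,·)) = 1, then Φ_γ(z,x) → Θ̃(x)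 as z → λ (i.e. Φ_γ(λ,x) = Θ̃_γ(λ,x)). -/
open Set Filter Topology

namespace Wr

variable (f g h : ℂ × ℂ) (p : ℂ)

theorem self : Wr f f = 0 := by
  simp only [Wr]; ring

theorem swap : Wr g f = -Wr f g := by
  simp only [Wr]; ring

theorem add_left : Wr (f + g) h = Wr f h + Wr g h := by
  simp only [Wr, Prod.fst_add, Prod.snd_add]; ring

theorem add_right : Wr f (g + h) = Wr f g + Wr f h := by
  simp only [Wr, Prod.fst_add, Prod.snd_add]; ring

theorem smul_left : Wr (p • f) g = p * Wr f g := by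
  simp only [Wr, Prod.smul_fst, Prod.smul_snd, smul_eq_mul]; ring

theorem smul_right : Wr f (p • g) = p * Wr f g := by
  simp only [Wr, Prod.smul_fst, Prod.smul_snd, smul_eq_mul]; ring

theorem add_smul_add_smul (u : ℂ × ℂ) (q : ℂ) :
    Wr (f + p • u) (g + q • u) = Wr f g + q * Wr f u + p * Wr u g := by
  simp only [add_left, add_right, smul_left, smul_right, self]; ring

end Wr

theorem Wr_doubleCommute_eq_one {d s β : ℂ} (hd : d ≠ 0) {u Θ Φ : ℂ × ℂ} (hΘΦ : Wr Θ Φ = 1) :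
    Wr (d⁻¹ • (Θ + (d⁻¹ * Wr u Θ) • (s • u) + β • (d • (Φ + (d⁻¹ * Wr u Φ) • (s • u)))))
      (d • (Φ + (d⁻¹ * Wr u Φ) • (s • u))) = 1 := by
  set Θ' := Θ + (d⁻¹ * Wr u Θ * s) • u
  set Φ' := Φ + (d⁻¹ * Wr u Φ * s) • u
  have hΘ' : Θ + (d⁻¹ * Wr u Θ) • (s • u) = Θ' := by rw [smul_smul]
  have hΦ' : Φ + (d⁻¹ * Wr u Φ) • (s • u) = Φ' := by rw [smul_smul]
  have hΘ'Φ' : Wr Θ' Φ' = 1 := by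
    rw [Wr.add_smul_add_smul, Wr.swap Θ u, hΘΦ]; ring
  rw [hΘ', hΦ', Wr.smul_left, Wr.smul_right, Wr.add_left, Wr.smul_left, Wr.smul_left, Wr.self,
    hΘ'Φ']
  field_simp
  ring

theorem tendsto_doubleCommute {lam : ℂ} {u t : ℂ × ℂ} {Φ : ℂ → ℂ × ℂ}
    (hΦ : ContinuousAt Φ lam) (hΦlam : Wr u (Φ lam) = 1) :
    Tendsto (fun w : ℂ => (w - lam) • (Φ w + ((w - lam)⁻¹ * Wr u (Φ w)) • t))
      (𝓝[≠] lam) (𝓝 t) := by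
  have hcont : ContinuousAt (fun w : ℂ => (w - lam) • Φ w + Wr u (Φ w) • t) lam := by
    simp only [Wr]; fun_prop
  have hlim : Tendsto (fun w : ℂ => (w - lam) • Φ w + Wr u (Φ w) • t) (𝓝 lam) (𝓝 t) := by
    simpa [hΦlam] using hcont.tendsto
  refine (hlim.mono_left nhdsWithin_le_nhds).congr' ?_
  filter_upwards [self_mem_nhdsWithin] with w hw
  rw [smul_add, smul_smul, ← mul_assoc, mul_inv_cancel₀ (sub_ne_zero.mpr hw), one_mul]

theorem double_commutation_right_endpoint_general
    (a b lam : ℝ) (z : ℂ) (hz : z ≠ (lam : ℂ)) (β : ℂ)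
    (Θlam : ℝ → ℝ × ℝ)
    (c : ℝ → ℝ)
    (Θt : ℝ → ℂ × ℂ) (hΘt : ∀ x ∈ Ioo a b, Θt x = ((c x : ℂ))⁻¹ • toC (Θlam x))
    (Θz Φz : ℝ → ℂ × ℂ) (hW : ∀ x ∈ Ioo a b, Wr (Θz x) (Φz x) = 1)
    (Φγ Θγ : ℝ → ℂ × ℂ)
    (hΦγ : ∀ x ∈ Ioo a b,
      Φγ x = (z - (lam : ℂ)) •
        (Φz x + ((z - (lam : ℂ))⁻¹ * Wr (toC (Θlam x)) (Φz x)) • Θt x))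
    (hΘγ : ∀ x ∈ Ioo a b,
      Θγ x = (z - (lam : ℂ))⁻¹ •
        (Θz x + ((z - (lam : ℂ))⁻¹ * Wr (toC (Θlam x)) (Θz x)) • Θt x + β • Φγ x)) :
    (∀ x ∈ Ioo a b, Wr (Θγ x) (Φγ x) = 1) ∧
    (∀ x ∈ Ioo a b, ∀ Φfam : ℂ → ℂ × ℂ,
      ContinuousAt Φfam (lam : ℂ) →
      Wr (toC (Θlam x)) (Φfam (lam : ℂ)) = 1 →
      Filter.Tendsto
        (fun w : ℂ => (w - (lam : ℂ)) •
          (Φfam w + ((w - (lam : ℂ))⁻¹ * Wr (toC (Θlam x)) (Φfam w)) • Θt x))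
        (nhdsWithin (lam : ℂ) {(lam : ℂ)}ᶜ)
        (nhds (Θt x))) := by
  refine ⟨fun x hx => ?_, fun x _ Φfam hcont hWlam => tendsto_doubleCommute hcont hWlam⟩
  rw [hΘγ x hx, hΦγ x hx, hΘt x hx]
  exact Wr_doubleCommute_eq_one (sub_ne_zero.mpr hz) (hW x hx)

/-- Double commutation at the right endpoint starting from the singular solution
`Θ(λ,·)`: the fundamental system `Φ_γ(z,·)`, `Θ_γ(z,·)` of the commuted operator
has Wronskian `1`, and at a fixed point `x`, if `z ↦ Φ(z,x)` is continuous at `λ`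
with `W_x(Θλ,Φ(λ,·)) = 1`, then `Φ_γ(z,x) → Θ̃(x)` as `z → λ`. -/
theorem double_commutation_right_endpoint
    (a b lam : ℝ) (z : ℂ) (hz : z ≠ (lam : ℂ)) (β : ℂ)
    (Θlam : ℝ → ℝ × ℝ)
    (c : ℝ → ℝ) (hc0 : ∀ x ∈ Ioo a b, c x ≠ 0)
    (Θt : ℝ → ℂ × ℂ) (hΘt : ∀ x ∈ Ioo a b, Θt x = ((c x : ℂ))⁻¹ • toC (Θlam x))
    (Θz Φz : ℝ → ℂ × ℂ) (hW : ∀ x ∈ Ioo a b, Wr (Θz x) (Φz x) = 1)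
    (Φγ Θγ : ℝ → ℂ × ℂ)
    (hΦγ : ∀ x ∈ Ioo a b,
      Φγ x = (z - (lam : ℂ)) •
        (Φz x + ((z - (lam : ℂ))⁻¹ * Wr (toC (Θlam x)) (Φz x)) • Θt x))
    (hΘγ : ∀ x ∈ Ioo a b,
      Θγ x = (z - (lam : ℂ))⁻¹ •
        (Θz x + ((z - (lam : ℂ))⁻¹ * Wr (toC (Θlam x)) (Θz x)) • Θt x + β • Φγ x)) :
    (∀ x ∈ Ioo a b, Wr (Θγ x) (Φγ x) = 1) ∧
    (∀ x ∈ Ioo a b, ∀ Φfam : ℂ → ℂ × ℂ,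
      ContinuousAt Φfam (lam : ℂ) →
      Wr (toC (Θlam x)) (Φfam (lam : ℂ)) = 1 →
      Filter.Tendsto
        (fun w : ℂ => (w - (lam : ℂ)) •
          (Φfam w + ((w - (lam : ℂ))⁻¹ * Wr (toC (Θlam x)) (Φfam w)) • Θt x))
        (nhdsWithin (lam : ℂ) {(lam : ℂ)}ᶜ)
        (nhds (Θt x))) :=
  double_commutation_right_endpoint_general a b lam z hz β Θlam c Θt hΘt Θz Φz hW Φγ Θγ hΦγ hΘγ
end

section
/- Let (a,b) ⊆ ℝ and Q : (a,b) → Matrix(2,2,ℂ) with real entries and Q₁₂ = Q₂₁. Let λ ∈ ℝ, z ∈ ℂ with z ≠ λ, and let u₋ : (a,b) → ℝ² be a differentiable real solution of (1/i)σ₂u₋' + Qu₋ = λu₋, let c : (a,b) → ℝ be differentiable with c(x) ≠ 0 and c'(x) = u₋(x)^⊤u₋(x) for all x, and set u_γ = u₋/c and Q_γ(x) = ((u₋₁(x)² − u₋₂(x)²)/c(x))·σ₁ − (2u₋₁(x)u₋₂(x)/c(x))·σ₃. Let u : (a,b) → ℂ² be a differentiable solution of (1/i)σ₂u' + Qu =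 zu, and define v(x) = u(x) + (u_γ(x)/(z−λ))·W_x(u₋,u). Then v is differentiable on (a,b) and satisfies (1/i)σ₂v'(x) + (Q(x) + Q_γ(x))v(x) = zv(x) for all x ∈ (a,b). -/
open Set

noncomputable section

/-- The Pauli matrix `σ₁` (as a complex matrix). -/
def sig1C : Matrix (Fin 2) (Fin 2) ℂ := !![0, 1; 1, 0]

/-- The Pauli matrix `σ₂` (as a complex matrix). -/
def sig2C : Matrix (Fin 2) (Fin 2) ℂ := !![0, -Complex.I; Complex.I, 0]

/-- The Pauli matrix `σ₃` (as a complex matrix). -/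
def sig3C : Matrix (Fin 2) (Fin 2) ℂ := !![1, 0; 0, -1]

/-!
Write `J = (1/i)σ₂`, `W = W(u₋, u)` and `k = W / ((z - λ) c)`, so that `v = u + k u₋`.
Since `Q` is symmetric, the potential terms cancel in `W'` and `W' = (λ - z) u₋ᵀu`; hence
`k' = -(u₋ᵀu + k u₋ᵀu₋) / c`. The matrix `P = (u₋₁² - u₋₂²) σ₁ - 2 u₋₁u₋₂ σ₃` with `Q_γ = P / c`
acts by `P w = W(u₋, w) u₋ + (u₋ᵀw) J u₋`, and with these two formulas the equation for `v`
becomes a linear combination of the equations for `u` and `u₋`.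
-/

open Matrix

def wronskian (f g : Fin 2 → ℂ) : ℂ := f 0 * g 1 - f 1 * g 0

lemma wronskian_self (f : Fin 2 → ℂ) : wronskian f f = 0 := by
  unfold wronskian; ring

lemma inv_I_smul_sig2C_mulVec (w : Fin 2 → ℂ) :
    Complex.I⁻¹ • sig2C *ᵥ w = ![-w 1, w 0] := by
  ext i
  fin_cases i <;> simp [sig2C, dotProduct, Fin.sum_univ_two, Complex.inv_I, ← mul_assoc]

lemma deriv_eq_of_dirac {Q : Matrix (Fin 2) (Fin 2) ℂ} {z : ℂ} {w w' : Fin 2 → ℂ}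
    (h : Complex.I⁻¹ • sig2C *ᵥ w' + Q *ᵥ w = z • w) :
    w' 0 = z * w 1 - (Q *ᵥ w) 1 ∧ w' 1 = (Q *ᵥ w) 0 - z * w 0 := by
  rw [inv_I_smul_sig2C_mulVec] at h
  have h0 := congrFun h 0
  have h1 := congrFun h 1
  simp only [Pi.add_apply, Pi.smul_apply, smul_eq_mul, cons_val_zero, cons_val_one] at h0 h1
  exact ⟨by linear_combination h1, by linear_combination -h0⟩

theorem HasDerivAt.wronskian {f g : ℝ → Fin 2 → ℂ} {f' g' : Fin 2 → ℂ} {x : ℝ}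
    (hf : HasDerivAt f f' x) (hg : HasDerivAt g g' x) :
    HasDerivAt (fun t => _root_.wronskian (f t) (g t))
      (_root_.wronskian f' (g x) + _root_.wronskian (f x) g') x := by
  have hfi := hasDerivAt_pi.mp hf
  have hgi := hasDerivAt_pi.mp hg
  unfold _root_.wronskian
  exact ((hfi 0).mul (hgi 1)).sub ((hfi 1).mul (hgi 0)) |>.congr_deriv (by ring)

lemma wronskian_deriv_of_dirac {Q : Matrix (Fin 2) (Fin 2) ℂ} (hQ : Q 0 1 = Q 1 0)
    {μ z : ℂ} {f f' g g' : Fin 2 → ℂ}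
    (hf : Complex.I⁻¹ • sig2C *ᵥ f' + Q *ᵥ f = μ • f)
    (hg : Complex.I⁻¹ • sig2C *ᵥ g' + Q *ᵥ g = z • g) :
    wronskian f' g + wronskian f g' = (μ - z) * (f ⬝ᵥ g) := by
  obtain ⟨hf0, hf1⟩ := deriv_eq_of_dirac hf
  obtain ⟨hg0, hg1⟩ := deriv_eq_of_dirac hg
  simp only [wronskian, hf0, hf1, hg0, hg1, mulVec, vec2_dotProduct, hQ]
  ring

def commutationPotential (m : Fin 2 → ℂ) : Matrix (Fin 2) (Fin 2) ℂ :=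
  (m 0 ^ 2 - m 1 ^ 2) • sig1C - (2 * m 0 * m 1) • sig3C

lemma commutationPotential_mulVec (m w : Fin 2 → ℂ) :
    commutationPotential m *ᵥ w
      = wronskian m w • m + (m ⬝ᵥ w) • (Complex.I⁻¹ • sig2C *ᵥ m) := by
  rw [inv_I_smul_sig2C_mulVec]
  ext i
  fin_cases i <;>
    simp only [commutationPotential, wronskian, sig1C, sig3C, mulVec, vec2_dotProduct, Fin.zero_eta,
      Fin.mk_one, Matrix.sub_apply, Matrix.smul_apply, of_apply, cons_val', cons_val_zero,
      cons_val_one, cons_val_fin_one, Pi.add_apply, Pi.smul_apply, smul_eq_mul] <;>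
    ring

lemma commuted_dirac_of_dirac {Q : Matrix (Fin 2) (Fin 2) ℂ} {μ z c k k' : ℂ}
    {m m' u u' : Fin 2 → ℂ}
    (hm : Complex.I⁻¹ • sig2C *ᵥ m' + Q *ᵥ m = μ • m)
    (hu : Complex.I⁻¹ • sig2C *ᵥ u' + Q *ᵥ u = z • u)
    (hk : c⁻¹ * wronskian m u = (z - μ) * k)
    (hk' : k' = -c⁻¹ * (m ⬝ᵥ u) - k * c⁻¹ * (m ⬝ᵥ m)) :
    Complex.I⁻¹ • sig2C *ᵥ (u' + (k • m' + k' • m))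
      + (Q + c⁻¹ • commutationPotential m) *ᵥ (u + k • m) = z • (u + k • m) := by
  simp only [mulVec_add, mulVec_smul, add_mulVec, smul_mulVec, commutationPotential_mulVec,
    wronskian_self]
  linear_combination (norm := module) hu + k • hm + hk' • (Complex.I⁻¹ • sig2C *ᵥ m) + hk • m

theorem double_commutation_transformed_solution_general
    (a b lam : ℝ) (z : ℂ) (hz : z ≠ (lam : ℂ))
    (Q : ℝ → Matrix (Fin 2) (Fin 2) ℂ)
    (hQsym : ∀ x ∈ Ioo a b, Q x 0 1 = Q x 1 0)
    (um um' : ℝ → Fin 2 → ℝ)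
    (hum : ∀ x ∈ Ioo a b,
      HasDerivAt (fun t => (fun i => ((um t i : ℝ) : ℂ)))
        (fun i => ((um' x i : ℝ) : ℂ)) x)
    (humeq : ∀ x ∈ Ioo a b,
      Complex.I⁻¹ • (sig2C.mulVec (fun i => ((um' x i : ℝ) : ℂ)))
        + (Q x).mulVec (fun i => ((um x i : ℝ) : ℂ))
        = (lam : ℂ) • (fun i => ((um x i : ℝ) : ℂ)))
    (c : ℝ → ℝ) (hc0 : ∀ x ∈ Ioo a b, c x ≠ 0)
    (hc' : ∀ x ∈ Ioo a b, HasDerivAt c (um x 0 ^ 2 + um x 1 ^ 2) x)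
    (Qγ : ℝ → Matrix (Fin 2) (Fin 2) ℂ)
    (hQγ : ∀ x ∈ Ioo a b,
      Qγ x = (((um x 0 ^ 2 - um x 1 ^ 2) / c x : ℝ) : ℂ) • sig1C
        - (((2 * um x 0 * um x 1) / c x : ℝ) : ℂ) • sig3C)
    (u u' : ℝ → Fin 2 → ℂ)
    (hu : ∀ x ∈ Ioo a b, HasDerivAt u (u' x) x)
    (hueq : ∀ x ∈ Ioo a b,
      Complex.I⁻¹ • (sig2C.mulVec (u' x)) + (Q x).mulVec (u x) = z • u x)
    (v : ℝ → Fin 2 → ℂ)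
    (hv : ∀ x, v x = u x
      + ((((um x 0 : ℝ) : ℂ) * u x 1 - ((um x 1 : ℝ) : ℂ) * u x 0) / (z - (lam : ℂ))) •
        (fun i => ((um x i / c x : ℝ) : ℂ))) :
    ∀ x ∈ Ioo a b, ∃ vd : Fin 2 → ℂ, HasDerivAt v vd x ∧
      Complex.I⁻¹ • (sig2C.mulVec vd) + (Q x + Qγ x).mulVec (v x) = z • v x := by
  intro x hx
  set m : ℝ → Fin 2 → ℂ := fun t i => (um t i : ℂ)
  set k : ℝ → ℂ := fun t => wronskian (m t) (u t) / ((z - lam) * c t)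
  have hzl : z - lam ≠ 0 := sub_ne_zero.mpr hz
  have hcx : (c x : ℂ) ≠ 0 := Complex.ofReal_ne_zero.mpr (hc0 x hx)
  have hv_eq : v = fun t => u t + k t • m t := by
    funext t i
    simp only [hv, Pi.add_apply, Pi.smul_apply, smul_eq_mul, Complex.ofReal_div, k, m, wronskian,
      ← div_div]
    ring
  have hcC : HasDerivAt (fun t => (c t : ℂ)) (m x ⬝ᵥ m x) x := by
    convert (hc' x hx).ofReal_comp using 1
    simp [m, vec2_dotProduct, sq]
  have hW : HasDerivAt (fun t => wronskian (m t) (u t)) ((lam - z) * (m x ⬝ᵥ u x)) x :=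
    ((hum x hx).wronskian (hu x hx)).congr_deriv
      (wronskian_deriv_of_dirac (hQsym x hx) (humeq x hx) (hueq x hx))
  have hk : HasDerivAt k (-(c x : ℂ)⁻¹ * (m x ⬝ᵥ u x) - k x * (c x : ℂ)⁻¹ * (m x ⬝ᵥ m x)) x :=
    (hW.div (hcC.const_mul (z - lam)) (mul_ne_zero hzl hcx)).congr_deriv
      (by simp only [k]; field_simp; ring)
  have hQγx : Qγ x = (c x : ℂ)⁻¹ • commutationPotential (m x) := by
    simp only [hQγ x hx, commutationPotential, m, smul_sub, smul_smul]
    push_cast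
    ring_nf
  rw [hv_eq, hQγx]
  exact ⟨_, (hu x hx).add (hk.smul (hum x hx)),
    commuted_dirac_of_dirac (humeq x hx) (hueq x hx) (by simp only [k]; field_simp) rfl⟩

/-- The transformation formula of the double commutation method: if `u₋` is a
real solution of `τu = λu`, `c' = u₋^⊤u₋`, `c ≠ 0`, `u_γ = u₋/c`, and `u`
solves `τu = zu`, then `v = u + (u_γ/(z-λ))·W(u₋,u)` solves the commuted
equation `τ_γv = zv` with `τ_γ = τ + Q_γ`. -/
theorem double_commutation_transformed_solution
    (a b lam : ℝ) (z : ℂ) (hz : z ≠ (lam : ℂ))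
    (Q : ℝ → Matrix (Fin 2) (Fin 2) ℂ)
    (hQreal : ∀ x ∈ Ioo a b, ∀ i j, (Q x i j).im = 0)
    (hQsym : ∀ x ∈ Ioo a b, Q x 0 1 = Q x 1 0)
    (um um' : ℝ → Fin 2 → ℝ)
    (hum : ∀ x ∈ Ioo a b,
      HasDerivAt (fun t => (fun i => ((um t i : ℝ) : ℂ)))
        (fun i => ((um' x i : ℝ) : ℂ)) x)
    (humeq : ∀ x ∈ Ioo a b,
      Complex.I⁻¹ • (sig2C.mulVec (fun i => ((um' x i : ℝ) : ℂ)))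
        + (Q x).mulVec (fun i => ((um x i : ℝ) : ℂ))
        = (lam : ℂ) • (fun i => ((um x i : ℝ) : ℂ)))
    (c : ℝ → ℝ) (hc0 : ∀ x ∈ Ioo a b, c x ≠ 0)
    (hc' : ∀ x ∈ Ioo a b, HasDerivAt c (um x 0 ^ 2 + um x 1 ^ 2) x)
    (Qγ : ℝ → Matrix (Fin 2) (Fin 2) ℂ)
    (hQγ : ∀ x ∈ Ioo a b,
      Qγ x = (((um x 0 ^ 2 - um x 1 ^ 2) / c x : ℝ) : ℂ) • sig1C
        - (((2 * um x 0 * um x 1) / c x : ℝ) : ℂ) • sig3C)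
    (u u' : ℝ → Fin 2 → ℂ)
    (hu : ∀ x ∈ Ioo a b, HasDerivAt u (u' x) x)
    (hueq : ∀ x ∈ Ioo a b,
      Complex.I⁻¹ • (sig2C.mulVec (u' x)) + (Q x).mulVec (u x) = z • u x)
    (v : ℝ → Fin 2 → ℂ)
    (hv : ∀ x, v x = u x
      + ((((um x 0 : ℝ) : ℂ) * u x 1 - ((um x 1 : ℝ) : ℂ) * u x 0) / (z - (lam : ℂ))) •
        (fun i => ((um x i / c x : ℝ) : ℂ))) :
    ∀ x ∈ Ioo a b, ∃ vd : Fin 2 → ℂ, HasDerivAt v vd x ∧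
      Complex.I⁻¹ • (sig2C.mulVec vd) + (Q x + Qγ x).mulVec (v x) = z • v x :=
  double_commutation_transformed_solution_general a b lam z hz Q hQsym um um' hum humeq c hc0 hc' Qγ
    hQγ u u' hu hueq v hv
end
end
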